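/- Let B be a residuated Boolean algebra and F a prime filter. Then there exist prime filters P and Q, each containing 1, such that for all a ∈ F and p ∈ P, a ⊗ p ∈ F, and for all q ∈ Q and a ∈ F, q ⊗ a ∈ F. -/
import Mathlib


/-- A filter on a lattice: nonempty, upward-closed, meet-closed. -/
def IsLatFilter {L : Type*} [Lattice L] (F : Set L) : Prop :=
  F.Nonempty ∧ (∀ a b : L, a ∈ F → a ≤ b → b ∈ F) ∧ (∀ a b : L, a ∈ F → b ∈ F → a ⊓ b ∈ F)

/-- A prime filter: a proper filter such that `a ⊔ b ∈ F` implies `a ∈ F` or `b ∈ F`. -/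
def IsPrimeLatFilter {L : Type*} [Lattice L] (F : Set L) : Prop :=
  IsLatFilter F ∧ F ≠ Set.univ ∧ ∀ a b : L, a ⊔ b ∈ F → a ∈ F ∨ b ∈ F

/-- A residuated Boolean algebra: a Boolean algebra with a unital product `*`
and residuals `ldiv` (⊸) and `rdiv` (⟜) satisfying the residuation law. -/
class ResiduatedBooleanAlgebra (B : Type*) extends BooleanAlgebra B, Mul B, One B where
  ldiv : B → B → B
  rdiv : B → B → B
  one_mul : ∀ a : B, 1 * a = a
  mul_one : ∀ a : B, a * 1 = a
  res_ldiv : ∀ a b c : B, a * b ≤ c ↔ b ≤ ldiv a c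
  res_rdiv : ∀ a b c : B, a * b ≤ c ↔ a ≤ rdiv c b

section Aux

variable {B : Type*} [ResiduatedBooleanAlgebra B]

open ResiduatedBooleanAlgebra

lemma RBA.mul_mono {a b x y : B} (hab : a ≤ b) (hxy : x ≤ y) : a * x ≤ b * y := by
  calc a * x ≤ b * x := (res_rdiv a x (b * x)).mpr
        (le_trans hab ((res_rdiv b x (b * x)).mp le_rfl))
    _ ≤ b * y := (res_ldiv b x (b * y)).mpr
        (le_trans hxy ((res_ldiv b y (b * y)).mp le_rfl))

lemma RBA.mul_sup_le (a x y : B) : a * (x ⊔ y) ≤ a * x ⊔ a * y := by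
  rw [res_ldiv]
  exact sup_le ((res_ldiv a x _).mp le_sup_left) ((res_ldiv a y _).mp le_sup_right)

lemma RBA.sup_mul_le (a x y : B) : (x ⊔ y) * a ≤ x * a ⊔ y * a := by
  rw [res_rdiv]
  exact sup_le ((res_rdiv x a _).mp le_sup_left) ((res_rdiv y a _).mp le_sup_right)

lemma RBA.mul_bot (a : B) : a * (⊥ : B) = ⊥ :=
  le_antisymm ((res_ldiv a ⊥ ⊥).mpr bot_le) bot_le

lemma RBA.bot_mul (a : B) : (⊥ : B) * a = ⊥ :=
  le_antisymm ((res_rdiv ⊥ a ⊥).mpr bot_le) bot_le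

/-- The key abstract lemma, applied with `f a p = a * p` and `f a q = q * a`. -/
lemma RBA.key (f : B → B → B)
    (hmono : ∀ ⦃a b x y : B⦄, a ≤ b → x ≤ y → f a x ≤ f b y)
    (hdist : ∀ a x y : B, f a (x ⊔ y) ≤ f a x ⊔ f a y)
    (hone : ∀ a : B, f a 1 = a)
    (hbot : ∀ a : B, f a ⊥ = ⊥)
    (F : Set B) (hF : IsPrimeLatFilter F) :
    ∃ P : Set B, IsPrimeLatFilter P ∧ (1 : B) ∈ P ∧ ∀ a ∈ F, ∀ p ∈ P, f a p ∈ F := by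
  obtain ⟨⟨⟨a₀, ha₀⟩, hup, hmeet⟩, hne, hprime⟩ := hF
  set C : Set (Set B) := {G | IsLatFilter G ∧ (1 : B) ∈ G ∧ ∀ a ∈ F, ∀ p ∈ G, f a p ∈ F}
    with hC
  have h1 : {x : B | 1 ≤ x} ∈ C := by
    refine ⟨⟨⟨1, le_rfl⟩, fun a b ha hab => le_trans ha hab,
      fun a b ha hb => le_inf ha hb⟩, le_rfl, ?_⟩
    intro a ha p hp
    exact hup _ _ ha (by simpa [hone a] using hmono (le_refl a) hp)
  have chain : ∀ c ⊆ C, IsChain (· ⊆ ·) c → c.Nonempty →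
      ∃ ub ∈ C, ∀ s ∈ c, s ⊆ ub := by
    intro c hcC hchain hcne
    refine ⟨⋃₀ c, ⟨⟨⟨1, ?_⟩, ?_, ?_⟩, ?_, ?_⟩, fun s hs => Set.subset_sUnion_of_mem hs⟩
    · obtain ⟨G, hG⟩ := hcne
      exact ⟨G, hG, (hcC hG).2.1⟩
    · rintro a b ⟨G, hGc, haG⟩ hab
      exact ⟨G, hGc, (hcC hGc).1.2.1 a b haG hab⟩
    · rintro a b ⟨G, hGc, haG⟩ ⟨H, hHc, hbH⟩
      rcases hchain.total hGc hHc with h | h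
      · exact ⟨H, hHc, (hcC hHc).1.2.2 a b (h haG) hbH⟩
      · exact ⟨G, hGc, (hcC hGc).1.2.2 a b haG (h hbH)⟩
    · obtain ⟨G, hG⟩ := hcne
      exact ⟨G, hG, (hcC hG).2.1⟩
    · rintro a ha p ⟨G, hGc, hpG⟩
      exact (hcC hGc).2.2 a ha p hpG
  obtain ⟨P, -, hPC, hPmax⟩ := zorn_subset_nonempty C chain _ h1
  obtain ⟨hPfil, h1P, hPS⟩ := hPC
  refine ⟨P, ⟨hPfil, ?_, ?_⟩, h1P, hPS⟩
  · -- properness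
    intro hPu
    have hb : (⊥ : B) ∈ P := hPu ▸ Set.mem_univ ⊥
    have : (⊥ : B) ∈ F := by
      have := hPS a₀ ha₀ ⊥ hb
      rwa [hbot] at this
    exact hne (Set.eq_univ_of_forall fun b => hup _ _ this bot_le)
  · -- primality
    intro x y hxy
    by_contra hcon
    push_neg at hcon
    obtain ⟨hxP, hyP⟩ := hcon
    -- extension of P by an element z
    have ext : ∀ z : B, z ∉ P → ∃ a ∈ F, ∃ p ∈ P, f a (p ⊓ z) ∉ F := by
      intro z hz
      by_contra hgood
      push_neg at hgood
      set G : Set B := {w | ∃ p ∈ P, p ⊓ z ≤ w} with hG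
      have hGC : G ∈ C := by
        refine ⟨⟨⟨z, 1, h1P, inf_le_right⟩, ?_, ?_⟩, ⟨1, h1P, inf_le_left⟩, ?_⟩
        · rintro a b ⟨p, hp, hpa⟩ hab
          exact ⟨p, hp, le_trans hpa hab⟩
        · rintro a b ⟨p, hp, hpa⟩ ⟨q, hq, hqb⟩
          exact ⟨p ⊓ q, hPfil.2.2 p q hp hq,
            le_inf (le_trans (inf_le_inf_right z inf_le_left) hpa)
                   (le_trans (inf_le_inf_right z inf_le_right) hqb)⟩
        · rintro a ha w ⟨p, hp, hpw⟩
          exact hup _ _ (hgood a ha p hp) (hmono (le_refl a) hpw)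
      have : G ⊆ P := hPmax hGC (fun p hp => ⟨p, hp, inf_le_left⟩)
      exact hz (this ⟨1, h1P, inf_le_right⟩)
    obtain ⟨a, ha, p, hp, hax⟩ := ext x hxP
    obtain ⟨b, hb, q, hq, hby⟩ := ext y hyP
    have hcF : a ⊓ b ∈ F := hmeet a b ha hb
    have hrP : p ⊓ q ⊓ (x ⊔ y) ∈ P := hPfil.2.2 _ _ (hPfil.2.2 p q hp hq) hxy
    have hfr : f (a ⊓ b) (p ⊓ q ⊓ (x ⊔ y)) ∈ F := hPS _ hcF _ hrP
    have hdec : p ⊓ q ⊓ (x ⊔ y) = (p ⊓ q ⊓ x) ⊔ (p ⊓ q ⊓ y) := inf_sup_left _ _ _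
    have hsplit : f (a ⊓ b) (p ⊓ q ⊓ x) ⊔ f (a ⊓ b) (p ⊓ q ⊓ y) ∈ F := by
      refine hup _ _ hfr ?_
      rw [hdec]
      exact hdist _ _ _
    rcases hprime _ _ hsplit with h | h
    · exact hax (hup _ _ h (hmono inf_le_left
        (inf_le_inf_right x inf_le_left)))
    · exact hby (hup _ _ h (hmono inf_le_right
        (inf_le_inf_right y inf_le_right)))

end Aux

theorem unital_filters {B : Type*} [ResiduatedBooleanAlgebra B]
    (F : Set B) (hF : IsPrimeLatFilter F) :
    ∃ P Q : Set B, IsPrimeLatFilter P ∧ IsPrimeLatFilter Q ∧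
      (1 : B) ∈ P ∧ (1 : B) ∈ Q ∧
      (∀ a ∈ F, ∀ p ∈ P, a * p ∈ F) ∧ (∀ q ∈ Q, ∀ a ∈ F, q * a ∈ F) := by
  obtain ⟨P, hP, h1P, hPmul⟩ := RBA.key (fun a p => a * p)
    (fun a b x y hab hxy => RBA.mul_mono hab hxy)
    (fun a x y => RBA.mul_sup_le a x y)
    (fun a => ResiduatedBooleanAlgebra.mul_one a)
    (fun a => RBA.mul_bot a) F hF
  obtain ⟨Q, hQ, h1Q, hQmul⟩ := RBA.key (fun a q => q * a)
    (fun a b x y hab hxy => RBA.mul_mono hxy hab)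
    (fun a x y => RBA.sup_mul_le a x y)
    (fun a => ResiduatedBooleanAlgebra.one_mul a)
    (fun a => RBA.bot_mul a) F hF
  exact ⟨P, Q, hP, hQ, h1P, h1Q, hPmul, fun q hq a ha => hQmul a ha q hq⟩
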